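/- Let K and m be positive integers with m ≥ K + 1. Over all probability vectors (q₁,…,q_m) with q_i ∈ [0,1) and Σq_i = 1, the maximum of Σ_i q_i(1-q_i)^K equals (1 - 1/m)^K, attained at the uniform distribution q_i = 1/m. -/

import Mathlib

/-- Tangent line inequality for `x (1-x)^K` at `x = a`, proved by induction on `K`. -/
lemma tangent_line_ineq : ∀ K : ℕ, 1 ≤ K → ∀ a x : ℝ, 0 ≤ a → ((K : ℝ) + 1) * a ≤ 1 →
    0 ≤ x → x ≤ 1 →
    x * (1 - x) ^ K ≤ (1 - a) ^ (K - 1) * (x * (1 - ((K : ℝ) + 1) * a) + K * a ^ 2) := by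
  intro K hK
  induction K, hK using Nat.le_induction with
  | base =>
    intro a x ha haK hx0 hx1
    simp only [pow_one, Nat.cast_one, Nat.sub_self, pow_zero, one_mul]
    nlinarith [sq_nonneg (x - a)]
  | succ n hn ih =>
    intro a x ha haK hx0 hx1
    have hcast : ((n : ℝ) + 1 + 1) * a ≤ 1 := by push_cast at haK; linarith
    have h1 : ((n : ℝ) + 1) * a ≤ 1 := by nlinarith
    have hP := ih a x ha h1 hx0 hx1
    have hc : (0 : ℝ) ≤ (1 - a) ^ (n - 1) := by
      apply pow_nonneg; nlinarith
    have hx1' : (0 : ℝ) ≤ 1 - x := by linarith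
    have hpow1 : (1 - x) ^ (n + 1) = (1 - x) ^ n * (1 - x) := pow_succ _ _
    have hpow2 : (1 - a) ^ (n + 1 - 1) = (1 - a) ^ (n - 1) * (1 - a) := by
      rw [← pow_succ]
      congr 1
      omega
    have step1 : x * (1 - x) ^ (n + 1) ≤
        ((1 - a) ^ (n - 1) * (x * (1 - ((n : ℝ) + 1) * a) + n * a ^ 2)) * (1 - x) := by
      rw [hpow1, ← mul_assoc]
      exact mul_le_mul_of_nonneg_right hP hx1'
    have inner : (1 - x) * (x * (1 - ((n : ℝ) + 1) * a) + n * a ^ 2) ≤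
        (1 - a) * (x * (1 - ((n : ℝ) + 1 + 1) * a) + ((n : ℝ) + 1) * a ^ 2) := by
      have hfac : (0 : ℝ) ≤ (1 - ((n : ℝ) + 1) * a) * (x - a) ^ 2 := by
        apply mul_nonneg _ (sq_nonneg _)
        linarith
      nlinarith [hfac]
    have step2 : ((1 - a) ^ (n - 1) * (x * (1 - ((n : ℝ) + 1) * a) + n * a ^ 2)) * (1 - x) ≤
        (1 - a) ^ (n + 1 - 1) * (x * (1 - ((n : ℝ) + 1 + 1) * a) + ((n : ℝ) + 1) * a ^ 2) := by
      rw [hpow2]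
      calc ((1 - a) ^ (n - 1) * (x * (1 - ((n : ℝ) + 1) * a) + n * a ^ 2)) * (1 - x)
          = (1 - a) ^ (n - 1) * ((1 - x) * (x * (1 - ((n : ℝ) + 1) * a) + n * a ^ 2)) := by ring
        _ ≤ (1 - a) ^ (n - 1) * ((1 - a) * (x * (1 - ((n : ℝ) + 1 + 1) * a) + ((n : ℝ) + 1) * a ^ 2)) :=
            mul_le_mul_of_nonneg_left inner hc
        _ = (1 - a) ^ (n - 1) * (1 - a) * (x * (1 - ((n : ℝ) + 1 + 1) * a) + ((n : ℝ) + 1) * a ^ 2) := by ring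
    calc x * (1 - x) ^ (n + 1) ≤ _ := step1
      _ ≤ _ := step2
      _ = (1 - a) ^ (n + 1 - 1) * (x * (1 - ((n + 1 : ℕ) + 1 : ℝ) * a) + ((n + 1 : ℕ) : ℝ) * a ^ 2) := by
          push_cast; ring

/-- For `m ≥ K+1`, over probability vectors `(q₁,…,q_m)` with
`q_i ∈ [0,1)` and `Σ q_i = 1`, the maximum of `Σ_i q_i (1-q_i)^K` is
`(1-1/m)^K`, attained at the uniform distribution. -/
theorem max_expected_miss_prob_uniform (K m : ℕ) (hK : 1 ≤ K) (hm : K + 1 ≤ m) :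
    (∀ q : Fin m → ℝ, (∀ i, q i ∈ Set.Ico (0 : ℝ) 1) → (∑ i, q i = 1) →
      ∑ i, q i * (1 - q i) ^ K ≤ (1 - 1 / (m : ℝ)) ^ K) ∧
    ((∀ i : Fin m, (1 / (m : ℝ)) ∈ Set.Ico (0 : ℝ) 1) ∧
      (∑ _i : Fin m, (1 / (m : ℝ)) = 1) ∧
      ∑ _i : Fin m, (1 / (m : ℝ)) * (1 - 1 / (m : ℝ)) ^ K = (1 - 1 / (m : ℝ)) ^ K) := by
  have hm2 : 2 ≤ m := by omega
  have hm0 : (0 : ℝ) < m := by positivity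
  have hm1 : (1 : ℝ) < m := by exact_mod_cast lt_of_lt_of_le one_lt_two (by exact_mod_cast hm2)
  set a : ℝ := 1 / (m : ℝ) with ha_def
  have ha0 : 0 ≤ a := by positivity
  have ha1 : a < 1 := by rw [ha_def]; rw [div_lt_one hm0]; exact hm1
  have haK : ((K : ℝ) + 1) * a ≤ 1 := by
    rw [ha_def, mul_one_div, div_le_one hm0]
    exact_mod_cast hm
  have hpow : (1 - a) ^ K = (1 - a) ^ (K - 1) * (1 - a) := by
    rw [← pow_succ]; congr 1; omega
  constructor
  · intro q hq hsum
    have key : ∀ i, q i * (1 - q i) ^ K ≤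
        (1 - a) ^ (K - 1) * (q i * (1 - ((K : ℝ) + 1) * a) + K * a ^ 2) := by
      intro i
      exact tangent_line_ineq K hK a (q i) ha0 haK (hq i).1 (le_of_lt (hq i).2)
    calc ∑ i, q i * (1 - q i) ^ K
        ≤ ∑ i, (1 - a) ^ (K - 1) * (q i * (1 - ((K : ℝ) + 1) * a) + K * a ^ 2) :=
          Finset.sum_le_sum fun i _ => key i
      _ = (1 - a) ^ (K - 1) * ((∑ i, q i) * (1 - ((K : ℝ) + 1) * a) + m * (K * a ^ 2)) := by
          rw [← Finset.mul_sum]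
          congr 1
          rw [Finset.sum_add_distrib, ← Finset.sum_mul, Finset.sum_const, Finset.card_univ,
            Fintype.card_fin, nsmul_eq_mul]
      _ = (1 - a) ^ (K - 1) * (1 - a) := by
          rw [hsum]
          congr 1
          rw [ha_def]
          field_simp
          ring
      _ = (1 - a) ^ K := hpow.symm
  · refine ⟨fun i => ⟨ha0, ha1⟩, ?_, ?_⟩
    · rw [Finset.sum_const, Finset.card_univ, Fintype.card_fin, nsmul_eq_mul, ha_def]
      field_simp
    · rw [Finset.sum_const, Finset.card_univ, Fintype.card_fin, nsmul_eq_mul, ha_def]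
      field_simp
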